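/- Let G=(V,E) be a connected graph such that R_d(G) has a strict circuit decomposition and each R_d-circuit is (d+1)-edge-connected. Then k_d(G) ≤ (1/2)(d−1)(|V| − (r*_d(G) + d + 1)), equivalently r*_d(G) ≤ |V| − (2/(d−1)) k_d(G) − (d+1) for d ≥ 2. -/

import Mathlib

open Module

/-- The row of the `d`-dimensional rigidity matrix corresponding to the edge `uv`, at the
realization `p : V → ℝ^d`: it has `p u - p v` in the `d` columns of `u`, `p v - p u` in
the `d` columns of `v`, and zeros elsewhere. -/
def rigidityRow {V : Type*} [DecidableEq V] (d : ℕ) (p : V → Fin d → ℝ) :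
    Sym2 V → (V × Fin d → ℝ) :=
  Sym2.lift ⟨fun u v x =>
      if x.1 = u then p u x.2 - p v x.2 else if x.1 = v then p v x.2 - p u x.2 else 0, by
    intro u v
    funext x
    by_cases huv : u = v
    · subst huv; rfl
    · by_cases h1 : x.1 = u <;> by_cases h2 : x.1 = v
      · exact absurd (h1 ▸ h2) huv
      · simp [h1, h2, huv, Ne.symm huv]
      · simp [h1, h2, huv, Ne.symm huv]
      · simp [h1, h2]⟩

/-- The rank, in the `d`-dimensional generic rigidity matroid on vertex set `V`, of a set
`A` of edges: the maximum, over all realizations `p : V → ℝ^d`, of the rank of the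
corresponding set of rigidity matrix rows. -/
noncomputable def genRigidityRank {V : Type*} [DecidableEq V] (d : ℕ) (A : Set (Sym2 V)) :
    ℕ :=
  ⨆ p : V → Fin d → ℝ, finrank ℝ (Submodule.span ℝ (rigidityRow d p '' A))

/-- A finite set `A` of edges is a circuit of the `d`-dimensional generic rigidity matroid
if its rank is `|A| - 1` and every proper subset is independent. -/
def IsRdCircuitSet {V : Type*} [DecidableEq V] (d : ℕ) (A : Set (Sym2 V)) : Prop :=
  A.Finite ∧ genRigidityRank d A + 1 = A.ncard ∧
    ∀ B ⊂ A, genRigidityRank d B = B.ncard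

/-- A graph `G` is an `R_d`-circuit if its edge set is a circuit of the `d`-dimensional
generic rigidity matroid. -/
def SimpleGraph.IsRdCircuit {V : Type*} [DecidableEq V] (d : ℕ) (G : SimpleGraph V) :
    Prop :=
  IsRdCircuitSet d G.edgeSet

/-- `k_d(G) = d|V| - binom(d+1)(2) - r_d(E)`, the number of degrees of freedom of `G`
in `ℝ^d` (an integer). -/
noncomputable def degFreedom {V : Type*} [DecidableEq V] [Fintype V] (d : ℕ)
    (G : SimpleGraph V) : ℤ :=
  d * Fintype.card V - (d + 1).choose 2 - genRigidityRank d G.edgeSet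

/-- The set of vertices covered by a set of edges. -/
def vertsOf {V : Type*} (A : Set (Sym2 V)) : Set V := {v | ∃ e ∈ A, v ∈ e}

/-- A set `A` of edges (viewed as a graph on `vertsOf A`) is `k`-edge-connected: every
edge cut separating its vertex set contains at least `k` edges. -/
def IsKEdgeConnectedEdgeSet {V : Type*} (k : ℕ) (A : Set (Sym2 V)) : Prop :=
  ∀ S : Set V, S ⊆ vertsOf A → S.Nonempty → (vertsOf A \ S).Nonempty →
    k ≤ {e ∈ A | ∃ u v : V, e = s(u, v) ∧ u ∈ S ∧ v ∉ S}.ncard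

/-- `D j = C 0 ∪ ⋯ ∪ C (j-1)`, the union of the first `j` edge sets of a sequence. -/
def circUnion {V : Type*} (C : ℕ → Set (Sym2 V)) (j : ℕ) : Set (Sym2 V) := ⋃ i < j, C i

/-- `(C 0, …, C (t-1))` is a circuit decomposition of the `d`-dimensional generic rigidity
matroid of `G`: each `C i` is an `R_d`-circuit contained in the edge set of `G`, for
`i ≥ 1` the lobe `C i \ D i` is nonempty (E1) and inclusionwise minimal among the lobes of
circuits of `R_d(G)` having a nonempty lobe (E2), and the circuits cover `E(G)`. -/
def SimpleGraph.IsRdCircDecomp {V : Type*} [DecidableEq V] (d : ℕ) (G : SimpleGraph V)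
    (C : ℕ → Set (Sym2 V)) (t : ℕ) : Prop :=
  (∀ i < t, C i ⊆ G.edgeSet ∧ IsRdCircuitSet d (C i)) ∧
  (∀ i, 1 ≤ i → i < t →
    C i \ circUnion C i ≠ ∅ ∧
    ∀ C' ⊆ G.edgeSet, IsRdCircuitSet d C' → C' \ circUnion C i ≠ ∅ →
      ¬ (C' \ circUnion C i ⊂ C i \ circUnion C i)) ∧
  circUnion C t = G.edgeSet

/-- A circuit decomposition is strict if every circuit adds at least one new vertex. -/
def SimpleGraph.IsStrictRdCircDecomp {V : Type*} [DecidableEq V] (d : ℕ)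
    (G : SimpleGraph V) (C : ℕ → Set (Sym2 V)) (t : ℕ) : Prop :=
  G.IsRdCircDecomp d C t ∧ ∀ i < t, (vertsOf (C i) \ vertsOf (circUnion C i)).Nonempty

/-!
A circuit decomposition `C 0, …, C (t-1)` of `E` has `r*_d(G) ≤ t`, since by (E2) each lobe
raises the nullity by at most one. For the edge count, let `c_j` be the number of components
of the spanning subgraph with edge set `D_j = C 0 ∪ ⋯ ∪ C (j-1)`, and `q_j` the number of
them met by `C j`. Adding `C j` leaves at least `c_j - q_j + 1` components, and
`(d+1)`-edge-connectivity yields `(d+1) q_j ≤ 2 |C j \ D_j|` because `C j` has a vertex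
outside `D_j`. Hence `2|D_j| + (d+1)(c_j - j)` never decreases; comparing `D_0 = ∅`
(`c_0 = |V|`) with `D_t = E` (`c_t = 1`) gives `2|E| ≥ (d+1)(|V| + t - 1) ≥
(d+1)(|V| + r*_d(G) - 1)`, and substituting `|E| = d|V| - binom(d+1, 2) - k_d(G) + r*_d(G)`
gives the bound.
-/

open Submodule SimpleGraph

section GenericRank

variable {V : Type*} [DecidableEq V] {d : ℕ}

noncomputable def rowRank (d : ℕ) (p : V → Fin d → ℝ) (A : Set (Sym2 V)) : ℕ :=
  finrank ℝ (span ℝ (rigidityRow d p '' A))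

def IsRdIndepSet (d : ℕ) (A : Set (Sym2 V)) : Prop :=
  genRigidityRank d A = A.ncard

lemma rowRank_le_ncard [Finite V] (p : V → Fin d → ℝ) (A : Set (Sym2 V)) :
    rowRank d p A ≤ A.ncard := by
  have := Fintype.ofFinite A
  rw [rowRank, Set.image_eq_range, Set.ncard_eq_toFinset_card', Set.toFinset_card]
  exact finrank_range_le_card _

lemma rowRank_eq_ncard_of_linearIndepOn [Finite V] {p : V → Fin d → ℝ} {A : Set (Sym2 V)}
    (hA : LinearIndepOn ℝ (rigidityRow d p) A) : rowRank d p A = A.ncard := by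
  have := Fintype.ofFinite A
  rw [rowRank, Set.image_eq_range, finrank_span_eq_card hA.linearIndependent,
    Set.ncard_eq_toFinset_card', Set.toFinset_card]

lemma rowRank_union_le [Finite V] (p : V → Fin d → ℝ) (A B : Set (Sym2 V)) :
    rowRank d p (A ∪ B) ≤ rowRank d p A + B.ncard := by
  rw [rowRank, Set.image_union, span_union]
  exact (finrank_add_le_finrank_add_finrank _ _).trans
    (Nat.add_le_add_left (rowRank_le_ncard p B) _)

lemma rowRank_le_genRigidityRank [Finite V] (p : V → Fin d → ℝ) (A : Set (Sym2 V)) :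
    rowRank d p A ≤ genRigidityRank d A :=
  le_ciSup (f := fun p => rowRank d p A)
    ⟨finrank ℝ (V × Fin d → ℝ), by rintro _ ⟨p, rfl⟩; exact finrank_le _⟩ p

lemma exists_rowRank_eq_genRigidityRank [Finite V] (A : Set (Sym2 V)) :
    ∃ p : V → Fin d → ℝ, rowRank d p A = genRigidityRank d A :=
  Nat.sSup_mem (Set.range_nonempty _)
    ⟨finrank ℝ (V × Fin d → ℝ), by rintro _ ⟨p, rfl⟩; exact finrank_le _⟩

lemma genRigidityRank_le_ncard [Finite V] (A : Set (Sym2 V)) :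
    genRigidityRank d A ≤ A.ncard :=
  ciSup_le fun p => rowRank_le_ncard p A

@[simp]
lemma genRigidityRank_empty [Finite V] : genRigidityRank d (∅ : Set (Sym2 V)) = 0 := by
  simpa using genRigidityRank_le_ncard (d := d) (∅ : Set (Sym2 V))

lemma genRigidityRank_mono [Finite V] {A B : Set (Sym2 V)} (h : A ⊆ B) :
    genRigidityRank d A ≤ genRigidityRank d B :=
  ciSup_le fun p =>
    (finrank_mono (span_mono (Set.image_mono h))).trans (rowRank_le_genRigidityRank p B)

lemma genRigidityRank_union_le [Finite V] (A B : Set (Sym2 V)) :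
    genRigidityRank d (A ∪ B) ≤ genRigidityRank d A + B.ncard :=
  ciSup_le fun p =>
    (rowRank_union_le p A B).trans (Nat.add_le_add_right (rowRank_le_genRigidityRank p A) _)

lemma IsRdIndepSet.subset [Finite V] {A B : Set (Sym2 V)} (hB : IsRdIndepSet d B)
    (h : A ⊆ B) : IsRdIndepSet d A := by
  have hunion := genRigidityRank_union_le (d := d) A (B \ A)
  rw [Set.union_sdiff_cancel h] at hunion
  have hcard := Set.ncard_sdiff_add_ncard_of_subset h
  have := genRigidityRank_le_ncard (d := d) A
  unfold IsRdIndepSet at hB ⊢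
  omega

lemma exists_isRdIndepSet_subset [Finite V] (A : Set (Sym2 V)) :
    ∃ B ⊆ A, IsRdIndepSet d B ∧ B.ncard = genRigidityRank d A := by
  obtain ⟨p, hp⟩ := exists_rowRank_eq_genRigidityRank (d := d) A
  obtain ⟨B, hBA, -, hAB, hB⟩ :=
    exists_linearIndepOn_extension (linearIndepOn_empty ℝ (rigidityRow d p)) A.empty_subset
  have hspan : rowRank d p B = rowRank d p A := by
    rw [rowRank, rowRank,
      le_antisymm (span_mono (Set.image_mono hBA)) (span_le.mpr hAB)]
  rw [rowRank_eq_ncard_of_linearIndepOn hB] at hspan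
  refine ⟨B, hBA, le_antisymm (genRigidityRank_le_ncard B) ?_, hspan.trans hp⟩
  exact (rowRank_eq_ncard_of_linearIndepOn hB).symm.le.trans (rowRank_le_genRigidityRank p B)

lemma exists_isRdCircuitSet_subset [Finite V] {A : Set (Sym2 V)}
    (hA : ¬ IsRdIndepSet d A) : ∃ C ⊆ A, IsRdCircuitSet d C := by
  obtain ⟨C, hCA, hmin⟩ := (Set.toFinite {S | ¬ IsRdIndepSet d S}).exists_le_minimal hA
  have hproper : ∀ B ⊂ C, genRigidityRank d B = B.ncard := fun B hB =>
    not_not.mp (hmin.not_prop_of_lt hB)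
  obtain ⟨x, hx⟩ : C.Nonempty := Set.nonempty_iff_ne_empty.mpr fun hC => hmin.prop <| by
    simp [hC, IsRdIndepSet]
  have hdrop := hproper _ (Set.sdiff_singleton_ssubset.mpr hx)
  have hmono := genRigidityRank_mono (d := d) (Set.sdiff_subset (s := C) (t := {x}))
  have hcard := Set.ncard_sdiff_singleton_add_one hx
  have hle := genRigidityRank_le_ncard (d := d) C
  refine ⟨C, hCA, C.toFinite, ?_, hproper⟩
  have : genRigidityRank d C ≠ C.ncard := hmin.prop
  omega

/-- A basis of `D` together with `K` minus one edge is dependent, and every circuit inside it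
meets `K`. -/
lemma exists_isRdCircuitSet_diff_ssubset [Finite V] {D K : Set (Sym2 V)} (hKD : Disjoint K D)
    (hrank : genRigidityRank d (D ∪ K) + 2 ≤ genRigidityRank d D + K.ncard) :
    ∃ C ⊆ D ∪ K, IsRdCircuitSet d C ∧ (C \ D).Nonempty ∧ C \ D ⊂ K := by
  obtain ⟨B, hBD, hB, hBcard⟩ := exists_isRdIndepSet_subset (d := d) D
  have hDK := genRigidityRank_mono (d := d) (Set.subset_union_left (s := D) (t := K))
  obtain ⟨e, he⟩ : K.Nonempty := Set.nonempty_of_ncard_ne_zero (by omega)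
  have hsub : B ∪ K \ {e} ⊆ D ∪ K := Set.union_subset_union hBD Set.sdiff_subset
  have hdep : ¬ IsRdIndepSet d (B ∪ K \ {e}) := by
    have hdisj : Disjoint B (K \ {e}) := (hKD.mono_left Set.sdiff_subset).symm.mono_left hBD
    have hcard := Set.ncard_sdiff_singleton_add_one he
    have := genRigidityRank_mono (d := d) hsub
    unfold IsRdIndepSet
    rw [Set.ncard_union_eq hdisj]
    omega
  obtain ⟨C, hCsub, hC⟩ := exists_isRdCircuitSet_subset hdep
  have hlobe : C \ D ⊆ K \ {e} := fun x hx =>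
    (hCsub hx.1).resolve_left fun hxB => hx.2 (hBD hxB)
  refine ⟨C, hCsub.trans hsub, hC, ?_, hlobe.trans_ssubset (Set.sdiff_singleton_ssubset.mpr he)⟩
  obtain ⟨x, hxC, hxB⟩ := Set.not_subset.mp fun hCB : C ⊆ B => by
    have hCindep : genRigidityRank d C = C.ncard := hB.subset hCB
    have := hC.2.1
    omega
  exact ⟨x, hxC, hKD.notMem_of_mem_left ((hCsub hxC).resolve_left hxB).1⟩

end GenericRank

section CircUnion

variable {V : Type*}

@[simp]
lemma circUnion_zero (C : ℕ → Set (Sym2 V)) : circUnion C 0 = ∅ := by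
  simp [circUnion]

lemma circUnion_succ (C : ℕ → Set (Sym2 V)) (j : ℕ) :
    circUnion C (j + 1) = circUnion C j ∪ C j :=
  Set.biUnion_lt_succ C j

lemma circUnion_succ_eq_union_diff (C : ℕ → Set (Sym2 V)) (j : ℕ) :
    circUnion C (j + 1) = circUnion C j ∪ (C j \ circUnion C j) := by
  rw [circUnion_succ, Set.union_sdiff_self]

lemma circUnion_subset {E : Set (Sym2 V)} {C : ℕ → Set (Sym2 V)} {j : ℕ}
    (h : ∀ i < j, C i ⊆ E) : circUnion C j ⊆ E :=
  Set.iUnion₂_subset h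

end CircUnion

section Nullity

variable {V : Type*} [DecidableEq V] [Finite V] {d : ℕ} {G : SimpleGraph V}
  {C : ℕ → Set (Sym2 V)} {t : ℕ}

/-- If the nullity jumped by two, some circuit would have a lobe strictly inside that of
`C i`, against (E2). -/
lemma genRigidityRank_add_ncard_lobe_le (hC : G.IsRdCircDecomp d C t) {i : ℕ} (hi : i < t) :
    genRigidityRank d (circUnion C i) + (C i \ circUnion C i).ncard ≤
      genRigidityRank d (circUnion C (i + 1)) + 1 := by
  rw [circUnion_succ_eq_union_diff]
  rcases Nat.eq_zero_or_pos i with rfl | hi0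
  · have hcirc := (hC.1 0 hi).2.2.1
    simp_all
  by_contra! hjump
  obtain ⟨C', hC'sub, hC', hlobe, hssub⟩ :=
    exists_isRdCircuitSet_diff_ssubset (d := d) (D := circUnion C i) (K := C i \ circUnion C i)
      Set.disjoint_sdiff_left (by omega)
  refine (hC.2.1 i hi0 hi).2 C' (hC'sub.trans ?_) hC' hlobe.ne_empty hssub
  rw [← circUnion_succ_eq_union_diff]
  exact circUnion_subset fun k hk => (hC.1 k (by omega)).1

lemma ncard_circUnion_le (hC : G.IsRdCircDecomp d C t) {j : ℕ} (hj : j ≤ t) :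
    (circUnion C j).ncard ≤ genRigidityRank d (circUnion C j) + j := by
  induction j with
  | zero => simp
  | succ j ih =>
    have hstep := genRigidityRank_add_ncard_lobe_le hC hj
    have hprev := ih (by omega)
    rw [circUnion_succ_eq_union_diff, Set.ncard_union_eq Set.disjoint_sdiff_right]
    rw [circUnion_succ_eq_union_diff] at hstep
    omega

end Nullity

lemma Set.ncard_mul_le_ncard_mul {α β : Type*} {s : Set α} {t : Set β} (hs : s.Finite)
    (ht : t.Finite) (r : α → β → Prop) {m n : ℕ} (hm : ∀ a ∈ s, m ≤ {b ∈ t | r a b}.ncard)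
    (hn : ∀ b ∈ t, {a ∈ s | r a b}.ncard ≤ n) : s.ncard * m ≤ t.ncard * n := by
  classical
  obtain ⟨s, rfl⟩ := hs.exists_finset_coe
  obtain ⟨t, rfl⟩ := ht.exists_finset_coe
  rw [Set.ncard_coe_finset, Set.ncard_coe_finset]
  refine Finset.card_mul_le_card_mul r (fun a ha => ?_) (fun b hb => ?_)
  · rw [← Set.ncard_coe_finset, Finset.coe_bipartiteAbove]
    exact hm a ha
  · rw [← Set.ncard_coe_finset, Finset.coe_bipartiteBelow]
    exact hn b hb

section Components

variable {V : Type*}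

lemma mem_vertsOf_of_reachable_of_ne {D : Set (Sym2 V)} {x y : V}
    (h : (fromEdgeSet D).Reachable x y) (hxy : x ≠ y) : x ∈ vertsOf D := by
  obtain ⟨w⟩ := h
  cases w with
  | nil => exact absurd rfl hxy
  | cons hadj _ => exact ⟨_, ((fromEdgeSet_adj D).mp hadj).1, Sym2.mem_mk_left _ _⟩

lemma reachable_of_reachable_union {D C : Set (Sym2 V)} {u w : V}
    (hu : (fromEdgeSet D).connectedComponentMk u ∉
      (fromEdgeSet D).connectedComponentMk '' vertsOf C)
    (h : (fromEdgeSet (D ∪ C)).Reachable u w) : (fromEdgeSet D).Reachable u w := by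
  by_contra huw
  obtain ⟨p⟩ := h
  obtain ⟨⟨⟨a, b⟩, hab⟩, -, ha, hb⟩ :=
    p.exists_boundary_dart {x | (fromEdgeSet D).Reachable u x} (Reachable.refl u) huw
  obtain ⟨hD | hC, hne⟩ := (fromEdgeSet_adj _).mp hab
  · exact hb (Reachable.trans ha ((fromEdgeSet_adj D).mpr ⟨hD, hne⟩).reachable)
  · exact hu ⟨a, ⟨_, hC, Sym2.mem_mk_left a b⟩, ConnectedComponent.eq.mpr ha.symm⟩

/-- Adding the edges `C` merges the components of `D` that meet `C` into at least one
component and leaves the others untouched. -/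
lemma card_connectedComponent_add_one_le [Finite V] {D C : Set (Sym2 V)}
    (hC : (vertsOf C).Nonempty) :
    Nat.card (fromEdgeSet D).ConnectedComponent + 1 ≤
      Nat.card (fromEdgeSet (D ∪ C)).ConnectedComponent +
        ((fromEdgeSet D).connectedComponentMk '' vertsOf C).ncard := by
  set Q := (fromEdgeSet D).connectedComponentMk '' vertsOf C
  set φ := ConnectedComponent.map (Hom.ofLE (fromEdgeSet_mono (Set.subset_union_left (t := C))))
  obtain ⟨v, hv⟩ := hC
  have hinj : Set.InjOn φ Qᶜ := by
    intro c hc c' _ hcc'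
    induction c using ConnectedComponent.ind
    induction c' using ConnectedComponent.ind
    simp only [φ, ConnectedComponent.map_mk, Hom.coe_ofLE, id, ConnectedComponent.eq] at hcc' ⊢
    exact reachable_of_reachable_union hc hcc'
  have hfresh : (fromEdgeSet (D ∪ C)).connectedComponentMk v ∉ φ '' Qᶜ := by
    rintro ⟨c, hc, hcv⟩
    induction c using ConnectedComponent.ind with | _ u
    simp only [φ, ConnectedComponent.map_mk, Hom.coe_ofLE, id, ConnectedComponent.eq] at hcv
    exact hc ⟨v, hv, ConnectedComponent.eq.mpr (reachable_of_reachable_union hc hcv).symm⟩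
  have hsplit := Set.ncard_add_ncard_compl Q
  have hcount :=
    Set.ncard_le_card (insert ((fromEdgeSet (D ∪ C)).connectedComponentMk v) (φ '' Qᶜ))
  rw [Set.ncard_insert_of_notMem hfresh, hinj.ncard_image] at hcount
  omega

/-- Double counting: every component of `D` meeting `C` is left by at least `k` edges of
`C`, none of which lies in `D`, and each edge leaves at most two components. -/
lemma mul_ncard_image_connectedComponentMk_le [Finite V] {k : ℕ} {D C : Set (Sym2 V)}
    (hdiag : ∀ e ∈ C, ¬ e.IsDiag) (hk : IsKEdgeConnectedEdgeSet k C)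
    (hnew : (vertsOf C \ vertsOf D).Nonempty) :
    ((fromEdgeSet D).connectedComponentMk '' vertsOf C).ncard * k ≤ (C \ D).ncard * 2 := by
  set mk := (fromEdgeSet D).connectedComponentMk
  let leaves (c : (fromEdgeSet D).ConnectedComponent) (e : Sym2 V) : Prop :=
    ∃ u v, e = s(u, v) ∧ mk u = c ∧ mk v ≠ c
  refine Set.ncard_mul_le_ncard_mul (Set.toFinite _) (Set.toFinite _) leaves ?_ ?_
  · rintro _ ⟨v, hv, rfl⟩
    obtain ⟨y, hy, hyv⟩ : ∃ y ∈ vertsOf C, mk y ≠ mk v := by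
      obtain ⟨x, ⟨e, he, hxe⟩, hxD⟩ := hnew
      by_cases hx : mk x = mk v
      · refine ⟨Sym2.Mem.other hxe, ⟨e, he, Sym2.other_mem hxe⟩, fun hy => hxD ?_⟩
        exact mem_vertsOf_of_reachable_of_ne (ConnectedComponent.eq.mp (hx.trans hy.symm))
          (Sym2.other_ne (hdiag e he) hxe).symm
      · exact ⟨x, ⟨e, he, hxe⟩, hx⟩
    refine (hk {w ∈ vertsOf C | mk w = mk v} (Set.sep_subset _ _) ⟨v, hv, rfl⟩
      ⟨y, hy, fun h => hyv h.2⟩).trans (Set.ncard_le_ncard ?_ (Set.toFinite _))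
    rintro _ ⟨he, u, w, rfl, hu, hw⟩
    have hwv : mk w ≠ mk v := fun h => hw ⟨⟨_, he, Sym2.mem_mk_right u w⟩, h⟩
    refine ⟨⟨he, fun heD => hwv ?_⟩, u, w, rfl, hu.2, hwv⟩
    have hne : u ≠ w := by rintro rfl; exact hwv hu.2
    exact (ConnectedComponent.eq.mpr
      ((fromEdgeSet_adj D).mpr ⟨heD, hne⟩).reachable).symm.trans hu.2
  · rintro e -
    induction e using Sym2.ind with | _ a b
    refine (Set.ncard_le_ncard (t := {mk a, mk b}) ?_).trans
      ((Set.ncard_insert_le _ _).trans (by rw [Set.ncard_singleton]))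
    rintro _ ⟨-, u, w, huw, rfl, -⟩
    rcases Sym2.mem_iff.mp (huw ▸ Sym2.mem_mk_left u w : u ∈ s(a, b)) with rfl | rfl <;> simp

end Components

section Counting

variable {V : Type*}

lemma card_connectedComponent_bot :
    Nat.card (⊥ : SimpleGraph V).ConnectedComponent = Nat.card V :=
  (Nat.card_eq_of_bijective _ ⟨fun _ _ h => reachable_bot.mp (ConnectedComponent.eq.mp h),
    fun c => c.ind fun v => ⟨v, rfl⟩⟩).symm

lemma SimpleGraph.Connected.card_connectedComponent {G : SimpleGraph V} (hG : G.Connected) :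
    Nat.card G.ConnectedComponent = 1 :=
  Nat.card_eq_one_iff_unique.mpr
    ⟨hG.preconnected.subsingleton_connectedComponent, ⟨G.connectedComponentMk hG.nonempty.some⟩⟩

lemma mul_card_add_le_circUnion [Finite V] {k t : ℕ} {C : ℕ → Set (Sym2 V)}
    (hdiag : ∀ i < t, ∀ e ∈ C i, ¬ e.IsDiag) (hk : ∀ i < t, IsKEdgeConnectedEdgeSet k (C i))
    (hnew : ∀ i < t, (vertsOf (C i) \ vertsOf (circUnion C i)).Nonempty) {j : ℕ} (hj : j ≤ t) :
    k * (Nat.card V + j) ≤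
      2 * (circUnion C j).ncard +
        k * Nat.card (fromEdgeSet (circUnion C j)).ConnectedComponent := by
  induction j with
  | zero => simp [card_connectedComponent_bot]
  | succ j ih =>
    have hj' : j < t := hj
    have hcomp := card_connectedComponent_add_one_le (D := circUnion C j)
      ((hnew j hj').mono Set.sdiff_subset)
    have hcut := mul_ncard_image_connectedComponentMk_le (hdiag j hj') (hk j hj') (hnew j hj')
    have hprev := ih hj'.le
    have hcard : (circUnion C (j + 1)).ncard =
        (circUnion C j).ncard + (C j \ circUnion C j).ncard := by
      rw [circUnion_succ_eq_union_diff, Set.ncard_union_eq Set.disjoint_sdiff_right]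
    rw [hcard, circUnion_succ]
    nlinarith

end Counting

/-- If `G = (V, E)` is a connected graph such that `R_d(G)` has a strict circuit
decomposition, and every `R_d`-circuit is `(d+1)`-edge-connected, then
`k_d(G) ≤ (1/2)(d-1)(|V| - (r*_d(G) + d + 1))`; equivalently, for `d ≥ 2`,
`r*_d(G) ≤ |V| - (2/(d-1)) k_d(G) - (d+1)`, where `r*_d(G) = |E| - r_d(E)`. -/
theorem strict_circDecomp_degFreedom_bound {V : Type*} [DecidableEq V] [Fintype V]
    (d : ℕ) (G : SimpleGraph V) [DecidableRel G.Adj]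
    (hconn : G.Connected)
    (C : ℕ → Set (Sym2 V)) (t : ℕ) (hdecomp : G.IsStrictRdCircDecomp d C t)
    (hec : ∀ A : Set (Sym2 V), IsRdCircuitSet d A → IsKEdgeConnectedEdgeSet (d + 1) A) :
    (degFreedom d G : ℚ) ≤
        (1 / 2) * ((d : ℚ) - 1) *
          ((Fintype.card V : ℚ) -
            (((G.edgeFinset.card : ℚ) - (genRigidityRank d G.edgeSet : ℚ)) + d + 1)) ∧
      (2 ≤ d →
        (G.edgeFinset.card : ℚ) - (genRigidityRank d G.edgeSet : ℚ) ≤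
          (Fintype.card V : ℚ) - (2 / ((d : ℚ) - 1)) * (degFreedom d G : ℚ) -
            ((d : ℚ) + 1)) := by
  obtain ⟨hdec, hnew⟩ := hdecomp
  have hnull := ncard_circUnion_le hdec le_rfl
  have hcount := mul_card_add_le_circUnion
    (fun i hi e he => G.not_isDiag_of_mem_edgeSet ((hdec.1 i hi).1 he))
    (fun i hi => hec _ (hdec.1 i hi).2) hnew le_rfl
  have hm : G.edgeSet.ncard = G.edgeFinset.card := by
    rw [← coe_edgeFinset, Set.ncard_coe_finset]
  rw [hdec.2.2, hm] at hnull hcount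
  rw [fromEdgeSet_edgeSet, hconn.card_connectedComponent, Nat.card_eq_fintype_card] at hcount
  set n := Fintype.card V
  set m := G.edgeFinset.card
  set r := genRigidityRank d G.edgeSet
  have hE : ((d : ℚ) + 1) * (n + (m - r) - 1) ≤ 2 * m := by
    qify at hnull hcount
    nlinarith
  have hk : (degFreedom d G : ℚ) = d * n - (d + 1) * d / 2 - r := by
    rw [degFreedom]
    push_cast [Nat.cast_choose_two]
    ring
  have hbound : (degFreedom d G : ℚ) ≤ 1 / 2 * (d - 1) * (n - (m - r + d + 1)) := by
    rw [hk]
    linarith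
  refine ⟨hbound, fun hd => ?_⟩
  have hd1 : (0 : ℚ) < d - 1 := by
    have : (2 : ℚ) ≤ d := by exact_mod_cast hd
    linarith
  have : 2 / ((d : ℚ) - 1) * degFreedom d G ≤ n - (m - r) - (d + 1) := by
    rw [div_mul_eq_mul_div, div_le_iff₀ hd1]
    linarith
  linarith
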